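/- arXiv:2605.06131 — 2 statements merged into one kernel-verified Lean document; each statement's English description precedes it below -/
import Mathlib

section
/- Let w_i, w_e, z_i, z_e, m², a, b ∈ ℝ with z_i + z_e = 1 and w_i + w_e ≠ 0, and set a = γ_ip_i/τ, b = γ_ep_e/τ. The unique solution of the linear system (w_i+z_e)x + (w_i−z_i)y = −m²(w_i−z_i) − a, (w_e−z_e)x + (w_e+z_i)y = −m²(w_e−z_e) − b is x = −(w_i−z_i)(m² − a − b)/(w_i+w_e) − a, y = −(w_e−z_e)(m² − a − b)/(w_i+w_e) − b. Consequently, if w_i > z_i, w_e > z_e, and m² − a − b > 0, then x < −a and y < −b. -/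
theorem stmt12 (wi we zi ze m2 a b x y γi γe pi pe τ : ℝ)
    (hz : zi + ze = 1) (hw : wi + we ≠ 0)
    (ha : a = γi * pi / τ) (hb : b = γe * pe / τ)
    (h1 : (wi + ze) * x + (wi - zi) * y = -m2 * (wi - zi) - a)
    (h2 : (we - ze) * x + (we + zi) * y = -m2 * (we - ze) - b) :
    (x = -(wi - zi) * (m2 - a - b) / (wi + we) - a
      ∧ y = -(we - ze) * (m2 - a - b) / (wi + we) - b)
    ∧ (zi < wi → ze < we → 0 < m2 - a - b → x < -a ∧ y < -b) := by
  have kx : (x + a) * (wi + we) = -(wi - zi) * (m2 - a - b) := by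
    linear_combination (we + zi) * h1 - (wi - zi) * h2 +
      (-m2 * (wi - zi) - x * (wi + we)) * hz
  have ky : (y + b) * (wi + we) = -(we - ze) * (m2 - a - b) := by
    linear_combination (wi + ze) * h2 - (we - ze) * h1 +
      (-m2 * (we - ze) - y * (wi + we)) * hz
  have hx : x = -(wi - zi) * (m2 - a - b) / (wi + we) - a := by
    rw [eq_sub_iff_add_eq, eq_div_iff hw] at *
    linarith [kx]
  have hy : y = -(we - ze) * (m2 - a - b) / (wi + we) - b := by
    rw [eq_sub_iff_add_eq, eq_div_iff hw]
    linarith [ky]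
  refine ⟨⟨hx, hy⟩, fun hi he hm => ?_⟩
  have hsum : 0 < wi + we := by linarith
  constructor
  · rw [hx]
    have : -(wi - zi) * (m2 - a - b) / (wi + we) < 0 :=
      div_neg_of_neg_of_pos (by nlinarith) hsum
    linarith
  · rw [hy]
    have : -(we - ze) * (m2 - a - b) / (wi + we) < 0 :=
      div_neg_of_neg_of_pos (by nlinarith) hsum
    linarith
end

section
/- Let w_i, w_e, z_i, z_e, m², a, b ∈ ℝ with z_i + z_e = 1 and w_i + w_e ≠ 0, where a = γ_ip_i/τ, b = γ_ep_e/τ, and let (x, y) solve the linear system (w_i+z_e)x + (w_i−z_i)y = −m²(w_i−z_i) − a, (w_e−z_e)x + (w_e+z_i)y = −m²(w_e−z_e) − b. Then (x = −a and y = −b) if and only if either (m² = a + b) or (w_i = z_i and w_e = z_e). -/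
theorem stmt13 (wi we zi ze m2 a b x y γi γe pi pe τ : ℝ)
    (hz : zi + ze = 1) (hw : wi + we ≠ 0)
    (ha : a = γi * pi / τ) (hb : b = γe * pe / τ)
    (h1 : (wi + ze) * x + (wi - zi) * y = -m2 * (wi - zi) - a)
    (h2 : (we - ze) * x + (we + zi) * y = -m2 * (we - ze) - b) :
    (x = -a ∧ y = -b) ↔ (m2 = a + b ∨ (wi = zi ∧ we = ze)) := by
  constructor
  · rintro ⟨rfl, rfl⟩
    have key1 : (wi - zi) * (m2 - a - b) = 0 := by linear_combination h1 + a * hz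
    have key2 : (we - ze) * (m2 - a - b) = 0 := by linear_combination h2 + b * hz
    by_cases hm : m2 = a + b
    · exact Or.inl hm
    · have hm' : m2 - a - b ≠ 0 := fun h => hm (by linarith)
      right
      constructor
      · have := (mul_eq_zero.mp key1).resolve_right hm'
        linarith
      · have := (mul_eq_zero.mp key2).resolve_right hm'
        linarith
  · rintro (hm | ⟨h3, h4⟩)
    · have hx : (wi + we) * (x + a) = 0 := by
        linear_combination (we + zi) * h1 - (wi - zi) * h2 +
          (-(wi + we) * x - m2 * (wi - zi)) * hz - (wi - zi) * hm
      have hy : (wi + we) * (y + b) = 0 := by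
        linear_combination -(we - ze) * h1 + (wi + ze) * h2 +
          (-(wi + we) * y - m2 * (we - ze)) * hz - (we - ze) * hm
      constructor
      · have := (mul_eq_zero.mp hx).resolve_left hw
        linarith
      · have := (mul_eq_zero.mp hy).resolve_left hw
        linarith
    · constructor
      · linear_combination h1 - x * hz - (x + y + m2) * h3
      · linear_combination h2 - y * hz - (y + x + m2) * h4
end
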